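/- For the rooted binary trees T_a = (((((2,3),4),5),6),1) and T_b = ((((2,6),(3,4)),5),1) on taxon set {1,…,6}, every character f attaining d_MP(T_a,T_b) uses at least 3 states; in particular the bound ⌊n/2⌋ on the number of states needed by an optimal convex character is tight for n = 6. -/

import Mathlib

/-!
Fitch's algorithm computes parsimony scores, so `d_MP(T_a, T_b) ≥ 2` is witnessed by a single
computation. Conversely, a character with at most two states scores exactly like its indicator
of one state (relabelling states never increases a score, and a two-state character can be
relabelled to `Bool` and back), and among the 64 Boolean characters on six taxa none changes
its score by more than one between `T_a` and `T_b`.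
-/

namespace MPDist

/-- A rooted binary phylogenetic tree: leaves are labelled by taxa,
every internal vertex (including the root) has exactly two children. -/
inductive PTree (X : Type) : Type
  | leaf : X → PTree X
  | node : PTree X → PTree X → PTree X

namespace PTree

/-- The list of leaf labels (taxa) of a tree. -/
def leaves {X : Type} : PTree X → List X
  | .leaf x => [x]
  | .node l r => l.leaves ++ r.leaves

/-- Relabelling of taxa. -/
def map {X Y : Type} (φ : X → Y) : PTree X → PTree Y
  | .leaf x => .leaf (φ x)
  | .node l r => .node (l.map φ) (r.map φ)

end PTree

/-- `T` is a phylogenetic tree on the taxon set `X`: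
its leaves are bijectively labelled by the elements of `X`. -/
def IsPhylo {X : Type} (T : PTree X) : Prop :=
  T.leaves.Nodup ∧ ∀ x : X, x ∈ T.leaves

/-- A state-labelled binary tree (an extension assigns a state to every vertex). -/
inductive ETree (C : Type) : Type
  | leaf : C → ETree C
  | node : C → ETree C → ETree C → ETree C

namespace ETree

/-- The state at the root. -/
def root {C : Type} : ETree C → C
  | .leaf c => c
  | .node c _ _ => c

/-- The number of edges `{u,v}` with different states at the two endpoints
(substitutions/mutations). -/
def changes {C : Type} [DecidableEq C] : ETree C → ℕ
  | .leaf _ => 0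
  | .node c l r =>
      ((if l.root = c then 0 else 1) + (if r.root = c then 0 else 1)) +
        (l.changes + r.changes)

end ETree

/-- `g` is an extension of the character `f` to the tree `T`: it has the same
shape as `T`, assigns a state to every vertex, and agrees with `f` on the taxa. -/
inductive IsExtension {X C : Type} (f : X → C) : PTree X → ETree C → Prop
  | leaf (x : X) : IsExtension f (.leaf x) (.leaf (f x))
  | node {l r : PTree X} {gl gr : ETree C} (c : C) :
      IsExtension f l gl → IsExtension f r gr →
      IsExtension f (.node l r) (.node c gl gr)

/-- The parsimony score `l_f(T)`: the minimum number of mutation edges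
over all extensions of `f` to `T`. -/
noncomputable def pscore {X C : Type} [DecidableEq C] (f : X → C) (T : PTree X) : ℕ :=
  sInf { k : ℕ | ∃ g : ETree C, IsExtension f T g ∧ g.changes = k }

/-- The MP distance `d_MP(T1,T2) = max_f |l_f(T1) − l_f(T2)|`, the maximum taken
over all characters `f` on the taxon set (states drawn from `ℕ`). -/
noncomputable def dMP {X : Type} (T1 T2 : PTree X) : ℕ :=
  sSup { k : ℕ | ∃ f : X → ℕ, k = ((pscore f T1 : ℤ) - (pscore f T2 : ℤ)).natAbs }

/-- `d^i_MP(T1,T2)`: as `dMP`, but over characters using at most `i` states. -/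
noncomputable def dMPk {X : Type} (i : ℕ) (T1 T2 : PTree X) : ℕ :=
  sSup { k : ℕ | ∃ f : X → Fin i, k = ((pscore f T1 : ℤ) - (pscore f T2 : ℤ)).natAbs }

/-- `max_f (l_f(T2) − l_f(T1))` over all characters `f`. -/
noncomputable def maxDiff {X : Type} (T1 T2 : PTree X) : ℤ :=
  sSup { d : ℤ | ∃ f : X → ℕ, d = (pscore f T2 : ℤ) - (pscore f T1 : ℤ) }

/-- `max_f (l_f(T2) − l_f(T1))` over all characters `f` with at most `i` states. -/
noncomputable def maxDiffk {X : Type} (i : ℕ) (T1 T2 : PTree X) : ℤ :=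
  sSup { d : ℤ | ∃ f : X → Fin i, d = (pscore f T2 : ℤ) - (pscore f T1 : ℤ) }

/-- `gap(T1,T2) = |max_f(l_f(T2)−l_f(T1)) − max_f(l_f(T1)−l_f(T2))|`. -/
noncomputable def gap {X : Type} (T1 T2 : PTree X) : ℤ :=
  |maxDiff T1 T2 - maxDiff T2 T1|

/-- `gap` restricted to characters with at most `i` states. -/
noncomputable def gapk {X : Type} (i : ℕ) (T1 T2 : PTree X) : ℤ :=
  |maxDiffk i T1 T2 - maxDiffk i T2 T1|

/-- `s` occurs as a (rooted) subtree of `t`. -/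
inductive IsSubtree {X : Type} : PTree X → PTree X → Prop
  | refl (t : PTree X) : IsSubtree t t
  | left {s l r : PTree X} : IsSubtree s l → IsSubtree s (.node l r)
  | right {s l r : PTree X} : IsSubtree s r → IsSubtree s (.node l r)

/-- Taxa `a`, `b` form a cherry of `T`: they are leaves with a common parent. -/
def IsCherry {X : Type} (T : PTree X) (a b : X) : Prop :=
  IsSubtree (.node (.leaf a) (.leaf b)) T

/-- Relabel a tree on taxa `ℕ` by shifting all labels up by `s` (fresh copies). -/
def shiftT (s : ℕ) (T : PTree ℕ) : PTree ℕ := T.map (fun x => x + s)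

/-- `T_a = (((((2,3),4),5),6),1)` on taxa `{1,…,6}` (taxon `j` encoded as `j-1`). -/
def Ta6 : PTree ℕ :=
  .node (.node (.node (.node (.node (.leaf 1) (.leaf 2)) (.leaf 3)) (.leaf 4)) (.leaf 5)) (.leaf 0)

/-- `T_b = ((((2,6),(3,4)),5),1)` on taxa `{1,…,6}` (taxon `j` encoded as `j-1`). -/
def Tb6 : PTree ℕ :=
  .node (.node (.node (.node (.leaf 1) (.leaf 5)) (.node (.leaf 2) (.leaf 3))) (.leaf 4)) (.leaf 0)

/-- `T_A`: two disjoint copies of `T_a` joined under a new root (12 taxa). -/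
def TA12 : PTree ℕ := .node Ta6 (shiftT 6 Ta6)

/-- `T_B`: two disjoint copies of `T_b` joined under a new root (12 taxa). -/
def TB12 : PTree ℕ := .node Tb6 (shiftT 6 Tb6)

/-- `TkA k` is the tree `T^{k+1}_A`: `k+1` disjoint copies of `T_A` arranged
along a caterpillar backbone (so `TkA 0 = T^1_A = T_A`). -/
def TkA : ℕ → PTree ℕ
  | 0 => TA12
  | k+1 => .node (TkA k) (shiftT (12*(k+1)) TA12)

/-- `TkB k` is the tree `T^{k+1}_B`. -/
def TkB : ℕ → PTree ℕ
  | 0 => TB12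
  | k+1 => .node (TkB k) (shiftT (12*(k+1)) TB12)

/-- `T_a = (((5,(6,4)),3),((1,(8,2)),7))` on taxa `{1,…,8}` (taxon `j` encoded as `j-1`). -/
def Ta8 : PTree ℕ :=
  .node (.node (.node (.leaf 4) (.node (.leaf 5) (.leaf 3))) (.leaf 2))
        (.node (.node (.leaf 0) (.node (.leaf 7) (.leaf 1))) (.leaf 6))

/-- `T_b = (((7,((4,2),6)),3),(8,(1,5)))` on taxa `{1,…,8}` (taxon `j` encoded as `j-1`). -/
def Tb8 : PTree ℕ :=
  .node (.node (.node (.leaf 6) (.node (.node (.leaf 3) (.leaf 1)) (.leaf 5))) (.leaf 2))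
        (.node (.leaf 7) (.node (.leaf 0) (.leaf 4)))

/-- `T_A` (2-state construction): two disjoint copies of `T_a` under a new root (16 taxa). -/
def TA16 : PTree ℕ := .node Ta8 (shiftT 8 Ta8)

/-- `T_B` (2-state construction): two disjoint copies of `T_b` under a new root (16 taxa). -/
def TB16 : PTree ℕ := .node Tb8 (shiftT 8 Tb8)

/-- `T_AA`: two disjoint copies of `T_A` under a new root (32 taxa). -/
def TAA : PTree ℕ := .node TA16 (shiftT 16 TA16)

/-- `T_BB`: two disjoint copies of `T_B` under a new root (32 taxa). -/
def TBB : PTree ℕ := .node TB16 (shiftT 16 TB16)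

/-- `TkAA k` is the tree `T^{k+1}_AA` (so `TkAA 0 = T^1_AA = T_AA`). -/
def TkAA : ℕ → PTree ℕ
  | 0 => TAA
  | k+1 => .node (TkAA k) (shiftT (32*(k+1)) TAA)

/-- `TkBB k` is the tree `T^{k+1}_BB`. -/
def TkBB : ℕ → PTree ℕ
  | 0 => TBB
  | k+1 => .node (TkBB k) (shiftT (32*(k+1)) TBB)


section Parsimony

variable {X C : Type} [DecidableEq C]

/-- Fitch's algorithm: the set of states at the root of some optimal extension, and the
parsimony score. -/
def fitch (f : X → C) : PTree X → Finset C × ℕ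
  | .leaf x => ({f x}, 0)
  | .node l r =>
      if ((fitch f l).1 ∩ (fitch f r).1).Nonempty
      then ((fitch f l).1 ∩ (fitch f r).1, (fitch f l).2 + (fitch f r).2)
      else ((fitch f l).1 ∪ (fitch f r).1, (fitch f l).2 + (fitch f r).2 + 1)

theorem fitch_fst_nonempty (f : X → C) : ∀ T : PTree X, (fitch f T).1.Nonempty
  | .leaf x => by simp [fitch]
  | .node l r => by
      rw [fitch]
      split
      · assumption
      · exact (fitch_fst_nonempty f l).mono Finset.subset_union_left

/-- Fitch's recursion is correct for every root state `c`, charging `c ∉ S` one change: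
it never exceeds the cost of placing `c` above optimal extensions of `l` and `r`, and
matches it when `c ∈ S`. -/
theorem fitch_node_le (f : X → C) (l r : PTree X) (c : C) :
    (fitch f (.node l r)).2 + (if c ∈ (fitch f (.node l r)).1 then 0 else 1) ≤
      ((fitch f l).2 + if c ∈ (fitch f l).1 then 0 else 1) +
        ((fitch f r).2 + if c ∈ (fitch f r).1 then 0 else 1) ∧
    (c ∈ (fitch f (.node l r)).1 →
      ((fitch f l).2 + if c ∈ (fitch f l).1 then 0 else 1) +
        ((fitch f r).2 + if c ∈ (fitch f r).1 then 0 else 1) = (fitch f (.node l r)).2) := by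
  rw [fitch]
  split
  case isTrue =>
    by_cases hl : c ∈ (fitch f l).1 <;> by_cases hr : c ∈ (fitch f r).1 <;> simp [hl, hr]; omega
  case isFalse hdisj =>
    have : ¬ (c ∈ (fitch f l).1 ∧ c ∈ (fitch f r).1) :=
      fun h => hdisj ⟨c, Finset.mem_inter.2 h⟩
    by_cases hl : c ∈ (fitch f l).1 <;> by_cases hr : c ∈ (fitch f r).1 <;> simp_all <;> omega

theorem fitch_add_le_changes (f : X → C) {T : PTree X} {g : ETree C} (h : IsExtension f T g) :
    ∀ c, (fitch f T).2 + (if c ∈ (fitch f T).1 then 0 else 1) ≤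
      (if g.root = c then 0 else 1) + g.changes := by
  induction h with
  | leaf x =>
      intro c
      by_cases hc : f x = c
      · subst hc
        simp [fitch, ETree.changes, ETree.root]
      · simp [fitch, ETree.changes, ETree.root, hc, Ne.symm hc]
  | @node l r gl gr c _ _ ihl ihr =>
      have hch : (ETree.node c gl gr).changes =
          (if gl.root = c then 0 else 1) + (if gr.root = c then 0 else 1) +
            (gl.changes + gr.changes) := rfl
      have hroot : (fitch f (.node l r)).2 + (if c ∈ (fitch f (.node l r)).1 then 0 else 1) ≤
          (ETree.node c gl gr).changes := by
        have := (fitch_node_le f l r c).1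
        have := ihl c
        have := ihr c
        rw [hch]
        omega
      intro d
      rw [show (ETree.node c gl gr).root = c from rfl]
      rcases eq_or_ne c d with rfl | hcd
      · simpa using hroot
      · have : (if d ∈ (fitch f (.node l r)).1 then 0 else 1) ≤ 1 := by split <;> omega
        simp only [hcd, if_false]
        omega

theorem fitch_le_changes (f : X → C) {T : PTree X} {g : ETree C} (h : IsExtension f T g) :
    (fitch f T).2 ≤ g.changes := by
  simpa using (fitch_add_le_changes f h g.root).trans' (Nat.le_add_right _ _)

theorem exists_mem_ite_eq_ite_mem {S : Finset C} (hS : S.Nonempty) (c : C) :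
    ∃ d ∈ S, (if d = c then 0 else 1) = (if c ∈ S then 0 else 1) := by
  by_cases hc : c ∈ S
  · exact ⟨c, hc, by simp [hc]⟩
  · obtain ⟨d, hd⟩ := hS
    exact ⟨d, hd, by simp [hc, show d ≠ c from fun h => hc (h ▸ hd)]⟩

theorem exists_extension_of_mem_fitch (f : X → C) :
    ∀ (T : PTree X), ∀ c ∈ (fitch f T).1,
      ∃ g : ETree C, IsExtension f T g ∧ g.root = c ∧ g.changes = (fitch f T).2
  | .leaf x, c, hc => by
      rw [show c = f x by simpa [fitch] using hc]
      exact ⟨_, .leaf x, rfl, rfl⟩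
  | .node l r, c, hc => by
      obtain ⟨dl, hdl, hcl⟩ := exists_mem_ite_eq_ite_mem (fitch_fst_nonempty f l) c
      obtain ⟨dr, hdr, hcr⟩ := exists_mem_ite_eq_ite_mem (fitch_fst_nonempty f r) c
      obtain ⟨gl, hgl, rfl, hchl⟩ := exists_extension_of_mem_fitch f l dl hdl
      obtain ⟨gr, hgr, rfl, hchr⟩ := exists_extension_of_mem_fitch f r dr hdr
      refine ⟨.node c gl gr, .node c hgl hgr, rfl, ?_⟩
      rw [← (fitch_node_le f l r c).2 hc, ← hcl, ← hcr, ← hchl, ← hchr]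
      simp only [ETree.changes]
      ring

theorem pscore_le_changes {f : X → C} {T : PTree X} {g : ETree C}
    (h : IsExtension f T g) : pscore f T ≤ g.changes :=
  Nat.sInf_le ⟨g, h, rfl⟩

theorem pscore_eq_fitch (f : X → C) (T : PTree X) :
    pscore f T = (fitch f T).2 := by
  obtain ⟨c, hc⟩ := fitch_fst_nonempty f T
  obtain ⟨g, hg, -, hch⟩ := exists_extension_of_mem_fitch f T c hc
  refine le_antisymm (hch ▸ pscore_le_changes hg) (le_csInf ⟨_, g, hg, rfl⟩ ?_)
  rintro k ⟨g', hg', rfl⟩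
  exact fitch_le_changes f hg'

theorem exists_extension_changes_eq_pscore (f : X → C) (T : PTree X) :
    ∃ g : ETree C, IsExtension f T g ∧ g.changes = pscore f T := by
  obtain ⟨c, hc⟩ := fitch_fst_nonempty f T
  obtain ⟨g, hg, -, hch⟩ := exists_extension_of_mem_fitch f T c hc
  exact ⟨g, hg, hch.trans (pscore_eq_fitch f T).symm⟩

theorem fitch_snd_lt_length (f : X → C) :
    ∀ T : PTree X, (fitch f T).2 < T.leaves.length
  | .leaf x => by simp [fitch, PTree.leaves]
  | .node l r => by
      have := fitch_snd_lt_length f l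
      have := fitch_snd_lt_length f r
      rw [fitch, PTree.leaves, List.length_append]
      split <;> omega

theorem pscore_lt_length (f : X → C) (T : PTree X) : pscore f T < T.leaves.length :=
  pscore_eq_fitch f T ▸ fitch_snd_lt_length f T

end Parsimony

namespace ETree

variable {C D : Type}

def map (σ : C → D) : ETree C → ETree D
  | .leaf c => .leaf (σ c)
  | .node c l r => .node (σ c) (l.map σ) (r.map σ)

theorem root_map (σ : C → D) (g : ETree C) : (g.map σ).root = σ g.root := by
  cases g <;> rfl

theorem changes_map_le [DecidableEq C] [DecidableEq D] (σ : C → D) :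
    ∀ g : ETree C, (g.map σ).changes ≤ g.changes
  | .leaf _ => le_rfl
  | .node c l r => by
      have := changes_map_le σ l
      have := changes_map_le σ r
      have hl : (if σ l.root = σ c then 0 else 1) ≤ (if l.root = c then 0 else 1) := by
        split_ifs with h₁ h₂ <;> simp_all
      have hr : (if σ r.root = σ c then 0 else 1) ≤ (if r.root = c then 0 else 1) := by
        split_ifs with h₁ h₂ <;> simp_all
      simp only [map, changes, root_map]
      omega

end ETree

namespace IsExtension

variable {X C D : Type} {f : X → C} {T : PTree X} {g : ETree C}

theorem map (σ : C → D) (h : IsExtension f T g) : IsExtension (σ ∘ f) T (g.map σ) := by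
  induction h with
  | leaf x => exact .leaf x
  | node c _ _ ihl ihr => exact .node (σ c) ihl ihr

theorem congr {f' : X → C} (h : IsExtension f T g) (hf : ∀ x ∈ T.leaves, f x = f' x) :
    IsExtension f' T g := by
  induction h with
  | leaf x => simpa [hf x (by simp [PTree.leaves])] using IsExtension.leaf (f := f') x
  | node c _ _ ihl ihr =>
      simp only [PTree.leaves, List.mem_append] at hf
      exact .node c (ihl fun x hx => hf x (.inl hx)) (ihr fun x hx => hf x (.inr hx))

end IsExtension

section Relabelling

variable {X C D : Type} [DecidableEq C] [DecidableEq D]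

theorem pscore_congr {f f' : X → C} {T : PTree X} (hf : ∀ x ∈ T.leaves, f x = f' x) :
    pscore f T = pscore f' T := by
  obtain ⟨g, hg, hch⟩ := exists_extension_changes_eq_pscore f T
  obtain ⟨g', hg', hch'⟩ := exists_extension_changes_eq_pscore f' T
  refine le_antisymm ?_ ?_
  · exact hch' ▸ pscore_le_changes (hg'.congr fun x hx => (hf x hx).symm)
  · exact hch ▸ pscore_le_changes (hg.congr hf)

theorem pscore_comp_le (σ : C → D) (f : X → C) (T : PTree X) :
    pscore (σ ∘ f) T ≤ pscore f T := by
  obtain ⟨g, hg, hch⟩ := exists_extension_changes_eq_pscore f T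
  exact hch ▸ (pscore_le_changes (hg.map σ)).trans (g.changes_map_le σ)

theorem pscore_comp_eq_of_leftInvOn {σ : C → D} {τ : D → C} {f : X → C} {T : PTree X}
    (hτ : ∀ x ∈ T.leaves, τ (σ (f x)) = f x) : pscore (σ ∘ f) T = pscore f T :=
  le_antisymm (pscore_comp_le σ f T)
    ((pscore_congr hτ).symm.le.trans (pscore_comp_le τ (σ ∘ f) T))

theorem pscore_decide_eq_of_card_le_two {f : X → C} {T : PTree X} {S : Finset C}
    (hS : S.card ≤ 2) (hf : ∀ x ∈ T.leaves, f x ∈ S) {a : C} (ha : a ∈ S) :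
    pscore (fun x => decide (f x = a)) T = pscore f T := by
  have : Nonempty C := ⟨a⟩
  obtain ⟨b, hb⟩ : ∃ b, S.erase a ⊆ {b} :=
    Finset.card_le_one_iff_subset_singleton.1 (by rw [Finset.card_erase_of_mem ha]; omega)
  refine pscore_comp_eq_of_leftInvOn (σ := fun c => decide (c = a))
    (τ := fun t => if t then a else b) fun x hx => ?_
  by_cases hxa : f x = a
  · simp [hxa]
  · simpa [hxa] using (Finset.mem_singleton.1 (hb (Finset.mem_erase.2 ⟨hxa, hf x hx⟩))).symm

end Relabelling

theorem leaves_Ta6_lt : ∀ x ∈ Ta6.leaves, x < 6 := by decide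

theorem leaves_Tb6_subset : Tb6.leaves ⊆ Ta6.leaves := by decide

theorem leaves_Tb6_lt : ∀ x ∈ Tb6.leaves, x < 6 :=
  fun x hx => leaves_Ta6_lt x (leaves_Tb6_subset hx)

set_option maxRecDepth 100000 in
theorem fitch_bool_Ta6_Tb6 : ∀ b : Fin 6 → Bool,
    (((fitch (fun x => b (Fin.ofNat 6 x)) Ta6).2 : ℤ) -
      (fitch (fun x => b (Fin.ofNat 6 x)) Tb6).2).natAbs ≤ 1 := by
  decide

theorem natAbs_pscore_sub_le_one_of_bool (g : ℕ → Bool) :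
    ((pscore g Ta6 : ℤ) - pscore g Tb6).natAbs ≤ 1 := by
  have hg : ∀ x < 6, g x = g (Fin.ofNat 6 x) := fun x hx => by
    rw [Fin.val_ofNat, Nat.mod_eq_of_lt hx]
  rw [pscore_congr fun x hx => hg x (leaves_Ta6_lt x hx),
    pscore_congr fun x hx => hg x (leaves_Tb6_lt x hx), pscore_eq_fitch, pscore_eq_fitch]
  exact fitch_bool_Ta6_Tb6 fun i => g i

theorem natAbs_pscore_sub_le_one_of_card_le_two (f : ℕ → ℕ)
    (hf : (Ta6.leaves.map f).toFinset.card ≤ 2) :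
    ((pscore f Ta6 : ℤ) - pscore f Tb6).natAbs ≤ 1 := by
  have hmem : ∀ x ∈ Ta6.leaves, f x ∈ (Ta6.leaves.map f).toFinset := fun x hx => by
    simpa using ⟨x, hx, rfl⟩
  have hA := pscore_decide_eq_of_card_le_two hf hmem (hmem 0 (by decide))
  have hB := pscore_decide_eq_of_card_le_two hf (fun x hx => hmem x (leaves_Tb6_subset hx))
    (hmem 0 (by decide))
  rw [← hA, ← hB]
  exact natAbs_pscore_sub_le_one_of_bool _

/-- Taxa 2, 3 get state 1 and taxa 4, 5 state 2: parsimony score 2 on `Ta6`, 4 on `Tb6`. -/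
def optimalChar : ℕ → ℕ := fun x => [0, 1, 1, 2, 2, 0].getD x 0

theorem two_le_dMP : 2 ≤ dMP Ta6 Tb6 := by
  refine le_csSup ⟨6, ?_⟩ ⟨optimalChar, ?_⟩
  · rintro k ⟨f, rfl⟩
    have := pscore_lt_length f Ta6
    have := pscore_lt_length f Tb6
    simp only [show Ta6.leaves.length = 6 from rfl, show Tb6.leaves.length = 6 from rfl] at *
    omega
  · rw [pscore_eq_fitch, pscore_eq_fitch]
    decide

/-- every character attaining `d_MP(T_a,T_b)` for the 6-taxon
trees `T_a`, `T_b` uses at least 3 states (so the `⌊n/2⌋` bound is tight for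
`n = 6`). -/
theorem optimal_needs_three_states (f : ℕ → ℕ)
    (hopt : ((pscore f Ta6 : ℤ) - (pscore f Tb6 : ℤ)).natAbs = dMP Ta6 Tb6) :
    3 ≤ (Ta6.leaves.map f).toFinset.card := by
  by_contra! hcard
  have := natAbs_pscore_sub_le_one_of_card_le_two f (by omega)
  have := two_le_dMP
  omega

end MPDist
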